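/- Assume M > (2/(3√3))√(α³/β) and let (x_l, v_l) be a solution of the controlled discrete Klein–Gordon system on [0,∞) with the feedback control u_l(t) = u(v_l(t)). Then for every l ∈ Λ̄, the velocity converges to zero: lim_{t→∞} v_l(t) = 0. -/

import Mathlib

/-!
Let `F(w) = (α - β w²) w + u(w)` be the local force. Summation by parts shows that the lattice
energy `E = Σ_l (v_l² + Σ_k (D (x_{l+e_k} - x_l))²) / 2` satisfies `E' = Σ_l v_l F(v_l)`. For the
paper's parameters `w F(w) ≤ -c w²` with `c > 0`: outside `[-a₂, a₂]` the cubic term is itself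
dissipative, inside `[-a₁, a₁]` the linear control slope `M / a₁` exceeds `α`, and in between the
control `M` beats the largest cubic gain `2 / (3√3) √(α³/β)`. So `E' ≤ -c v_l²` and `E` is
nonincreasing; this bounds velocities and lattice gradients, hence accelerations, so `v_l²` is
uniformly continuous, and Barbalat's argument gives `v_l → 0`.
-/

open Finset Filter

/-- The discrete torus `(ℤ/Dℤ)^n`. -/
abbrev Site (D n : ℕ) : Type := Fin n → ZMod D

/-- Sum over the `2n` neighbors `l ± e_k` of a site `l`. -/
noncomputable def nbrSum {D n : ℕ} (g : Site D n → ℝ) (l : Site D n) : ℝ :=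
  ∑ k : Fin n, (g (Function.update l k (l k + 1)) + g (Function.update l k (l k - 1)))

/-- The discrete Laplacian `Δ_D f(l) = Σ_{l'∼l} (f(l') − f(l))/h²` with `h = 1/D`. -/
noncomputable def lap {D n : ℕ} (f : Site D n → ℝ) (l : Site D n) : ℝ :=
  nbrSum (fun l' => (f l' - f l) / ((1 : ℝ) / (D : ℝ)) ^ 2) l

/-- The feedback control of the paper (equation (2.3)). -/
noncomputable def fb (M a₁ a₂ : ℝ) (v : ℝ) : ℝ :=
  if 2 * a₂ ≤ |v| then 0
  else if a₂ < |v| then -M * (v / |v|) * (2 - |v| / a₂)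
  else if a₁ ≤ |v| then -M * (v / |v|)
  else -M * (v / a₁)

open Set Topology

section Lattice

variable {D n : ℕ}

lemma update_add_eq_add_single (l : Site D n) (k : Fin n) (a : ZMod D) :
    Function.update l k (l k + a) = l + Pi.single k a := by
  ext j
  rcases eq_or_ne j k with rfl | hj <;> simp [*]

lemma update_sub_eq_sub_single (l : Site D n) (k : Fin n) (a : ZMod D) :
    Function.update l k (l k - a) = l - Pi.single k a := by
  simpa [sub_eq_add_neg, Pi.single_neg] using update_add_eq_add_single l k (-a)

lemma lap_eq (f : Site D n → ℝ) (l : Site D n) :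
    lap f l = D * ∑ k : Fin n,
      (D * (f (l + Pi.single k 1) - f l) - D * (f l - f (l - Pi.single k 1))) := by
  simp only [lap, nbrSum, update_add_eq_add_single, update_sub_eq_sub_single, one_div,
    inv_pow, div_inv_eq_mul, mul_sum]
  exact sum_congr rfl fun k _ => by ring

lemma abs_lap_le {f : Site D n → ℝ} {r : ℝ}
    (hf : ∀ l (k : Fin n), |D * (f (l + Pi.single k 1) - f l)| ≤ r) (l : Site D n) :
    |lap f l| ≤ 2 * n * D * r := by
  have hterm : ∀ k : Fin n,
      |D * (f (l + Pi.single k 1) - f l) - D * (f l - f (l - Pi.single k 1))| ≤ 2 * r := by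
    intro k
    have hback := hf (l - Pi.single k 1) k
    rw [sub_add_cancel] at hback
    linarith [abs_sub (D * (f (l + Pi.single k 1) - f l)) (D * (f l - f (l - Pi.single k 1))),
      hf l k]
  calc |lap f l| = D * |∑ k : Fin n,
        (D * (f (l + Pi.single k 1) - f l) - D * (f l - f (l - Pi.single k 1)))| := by
        rw [lap_eq, abs_mul, Nat.abs_cast]
    _ ≤ D * ∑ _k : Fin n, 2 * r := by
        gcongr
        exact (abs_sum_le_sum_abs _ _).trans (sum_le_sum fun k _ => hterm k)
    _ = 2 * n * D * r := by simp; ring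

variable [NeZero D]

lemma sum_mul_lap (f g : Site D n → ℝ) :
    ∑ l, g l * lap f l = -∑ l, ∑ k : Fin n,
      (D * (f (l + Pi.single k 1) - f l)) * (D * (g (l + Pi.single k 1) - g l)) := by
  set e : Fin n → Site D n := fun k => Pi.single k 1
  -- shifting `l ↦ l + e k` turns the backward differences into forward ones
  have hshift : ∀ k, ∑ l, g l * D * (D * (f l - f (l - e k)))
      = ∑ l, g (l + e k) * D * (D * (f (l + e k) - f l)) := fun k =>
    (Fintype.sum_equiv (Equiv.addRight (e k)) _ _ fun l => by simp).symm
  calc ∑ l, g l * lap f l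
      = ∑ k, (∑ l, g l * D * (D * (f (l + e k) - f l))
          - ∑ l, g l * D * (D * (f l - f (l - e k)))) := by
        simp only [lap_eq, mul_sum, ← sum_sub_distrib]
        rw [sum_comm]
        exact sum_congr rfl fun k _ => sum_congr rfl fun l _ => by ring
    _ = -∑ l, ∑ k, (D * (f (l + e k) - f l)) * (D * (g (l + e k) - g l)) := by
        simp only [hshift, ← sum_sub_distrib, ← sum_neg_distrib]
        rw [sum_comm]
        exact sum_congr rfl fun k _ => sum_congr rfl fun l _ => by ring

end Lattice

section Energy

variable {D n : ℕ} [NeZero D]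

noncomputable def energy (q p : Site D n → ℝ) : ℝ :=
  ∑ l, (p l ^ 2 + ∑ k : Fin n, (D * (q (l + Pi.single k 1) - q l)) ^ 2) / 2

lemma energy_nonneg (q p : Site D n → ℝ) : 0 ≤ energy q p := by
  unfold energy; positivity

lemma sq_add_sum_sq_le_two_mul_energy (q p : Site D n → ℝ) (l : Site D n) :
    p l ^ 2 + ∑ k : Fin n, (D * (q (l + Pi.single k 1) - q l)) ^ 2 ≤ 2 * energy q p := by
  rw [energy, ← sum_div, mul_div_cancel₀ _ two_ne_zero]
  exact single_le_sum
    (f := fun l => p l ^ 2 + ∑ k : Fin n, (D * (q (l + Pi.single k 1) - q l)) ^ 2)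
    (fun _ _ => by positivity) (mem_univ l)

lemma sq_le_two_mul_energy (q p : Site D n → ℝ) (l : Site D n) :
    p l ^ 2 ≤ 2 * energy q p :=
  (le_add_of_nonneg_right (by positivity)).trans (sq_add_sum_sq_le_two_mul_energy q p l)

lemma sq_diff_le_two_mul_energy (q p : Site D n → ℝ) (l : Site D n) (k : Fin n) :
    (D * (q (l + Pi.single k 1) - q l)) ^ 2 ≤ 2 * energy q p := by
  have hk : (D * (q (l + Pi.single k 1) - q l)) ^ 2
      ≤ ∑ k : Fin n, (D * (q (l + Pi.single k 1) - q l)) ^ 2 := by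
    apply single_le_sum (f := fun j : Fin n => (D * (q (l + Pi.single j 1) - q l)) ^ 2)
      (fun _ _ => sq_nonneg _) (mem_univ k)
  linarith [sq_add_sum_sq_le_two_mul_energy q p l, sq_nonneg (p l)]

lemma hasDerivAt_energy {x v : Site D n → ℝ → ℝ} {a : Site D n → ℝ} {t : ℝ}
    (hx : ∀ l, HasDerivAt (x l) (v l t) t)
    (hv : ∀ l, HasDerivAt (v l) (lap (fun l' => x l' t) l + a l) t) :
    HasDerivAt (fun s => energy (fun l => x l s) (fun l => v l s)) (∑ l, v l t * a l) t := by
  have h := HasDerivAt.fun_sum (u := univ) fun l _ =>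
    (((hv l).fun_pow 2).fun_add (HasDerivAt.fun_sum (u := univ) fun k _ =>
      (((hx (l + Pi.single k 1)).fun_sub (hx l)).const_mul (D : ℝ)).fun_pow 2)).div_const 2
  refine h.congr_deriv ?_
  simp only [Nat.cast_ofNat, Nat.add_one_sub_one, pow_one, add_div, mul_add, mul_assoc,
    ← mul_sum, sum_add_distrib, mul_div_cancel_left₀ _ (two_ne_zero' ℝ),
    sum_mul_lap (fun l => x l t) (fun l => v l t)]
  ring

end Energy

section Calculus

variable {f f' : ℝ → ℝ} {s : Set ℝ}

lemma antitoneOn_of_forall_hasDerivAt_nonpos (hs : Convex ℝ s)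
    (hf : ∀ x ∈ s, HasDerivAt f (f' x) x) (hf' : ∀ x ∈ s, f' x ≤ 0) : AntitoneOn f s :=
  antitoneOn_of_hasDerivWithinAt_nonpos hs
    (fun x hx => (hf x hx).continuousAt.continuousWithinAt)
    (fun x hx => (hf x (interior_subset hx)).hasDerivWithinAt)
    (fun x hx => hf' x (interior_subset hx))

lemma uniformContinuousOn_of_forall_hasDerivAt_abs_le {C : ℝ} (hs : Convex ℝ s)
    (hf : ∀ x ∈ s, HasDerivAt f (f' x) x) (hC : ∀ x ∈ s, |f' x| ≤ C) :
    UniformContinuousOn f s := by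
  refine (hs.lipschitzOnWith_of_nnnorm_hasDerivWithin_le (C := C.toNNReal)
    (fun x hx => (hf x hx).hasDerivWithinAt) fun x hx => ?_).uniformContinuousOn
  rw [← NNReal.coe_le_coe, coe_nnnorm, Real.norm_eq_abs, Real.coe_toNNReal']
  exact (hC x hx).trans (le_max_left _ _)

/-- A form of Barbalat's lemma. -/
theorem tendsto_zero_of_hasDerivAt_le_neg {E E' g : ℝ → ℝ}
    (hE : ∀ t, 0 ≤ t → HasDerivAt E (E' t) t) (hE' : ∀ t, 0 ≤ t → E' t ≤ -g t)
    (hE_bdd : BddBelow (E '' Ici 0)) (hg_nonneg : ∀ t, 0 ≤ t → 0 ≤ g t)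
    (hg : UniformContinuousOn g (Ici 0)) : Tendsto g atTop (𝓝 0) := by
  have hanti : AntitoneOn E (Ici 0) := antitoneOn_of_forall_hasDerivAt_nonpos (convex_Ici 0) hE
    fun t ht => (hE' t ht).trans (neg_nonpos.2 (hg_nonneg t ht))
  obtain ⟨L, hL⟩ : ∃ L, Tendsto E atTop (𝓝 L) := by
    have hanti' : Antitone fun t => E (max t 0) := fun a b hab =>
      hanti (le_max_right a 0) (le_max_right b 0) (max_le_max_right 0 hab)
    refine ⟨_, (tendsto_atTop_ciInf hanti' ?_).congr' ?_⟩
    · obtain ⟨m, hm⟩ := hE_bdd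
      exact ⟨m, by rintro _ ⟨t, rfl⟩; exact hm ⟨_, le_max_right t 0, rfl⟩⟩
    · filter_upwards [eventually_ge_atTop 0] with t ht using by rw [max_eq_left ht]
  refine tendsto_order.2 ⟨fun a ha => ?_, fun ε hε => ?_⟩
  · filter_upwards [eventually_ge_atTop 0] with t ht using ha.trans_le (hg_nonneg t ht)
  obtain ⟨δ, hδ, hgδ⟩ := Metric.uniformContinuousOn_iff.1 hg (ε / 2) (half_pos hε)
  have hdrop : Tendsto (fun t => E t - E (t + δ / 2)) atTop (𝓝 0) := by
    simpa using hL.sub (hL.comp (tendsto_atTop_add_const_right _ (δ / 2) tendsto_id))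
  filter_upwards [eventually_ge_atTop 0,
    hdrop.eventually (gt_mem_nhds (by positivity : (0 : ℝ) < δ / 2 * (ε / 2)))]
    with t ht hsmall
  by_contra! hgt
  -- `g > ε / 2` on `[t, t + δ / 2]`, so `E` drops there by at least `δ / 2 * (ε / 2)`
  have hdecay : AntitoneOn (fun s => E s + ε / 2 * s) (Icc t (t + δ / 2)) := by
    refine antitoneOn_of_forall_hasDerivAt_nonpos (convex_Icc _ _)
      (fun s hs => (hE s (ht.trans hs.1)).add ((hasDerivAt_id s).const_mul _)) fun s hs => ?_
    have hdist : dist s t < δ := by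
      rw [Real.dist_eq, abs_of_nonneg (by linarith [hs.1])]; linarith [hs.2]
    have := hgδ s (mem_Ici.2 (ht.trans hs.1)) t (mem_Ici.2 ht) hdist
    rw [Real.dist_eq, abs_lt] at this
    linarith [hE' s (ht.trans hs.1)]
  have := hdecay ⟨le_rfl, by linarith⟩ ⟨by linarith, le_rfl⟩ (by linarith)
  linarith

lemma tendsto_zero_of_tendsto_mul_sq {f : ℝ → ℝ} {c : ℝ} (hc : 0 < c)
    (h : Tendsto (fun t => c * f t ^ 2) atTop (𝓝 0)) : Tendsto f atTop (𝓝 0) := by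
  have hsq : Tendsto (fun t => f t ^ 2) atTop (𝓝 0) := by
    simpa [hc.ne'] using h.const_mul c⁻¹
  rw [tendsto_zero_iff_abs_tendsto_zero]
  simpa [Real.sqrt_sq_eq_abs, Function.comp_def] using hsq.sqrt

end Calculus

section Force

variable {α β M a₁ a₂ : ℝ}

noncomputable def force (α β M a₁ a₂ w : ℝ) : ℝ := (α - β * w ^ 2) * w + fb M a₁ a₂ w

lemma mul_div_abs_self (w : ℝ) : w * (w / |w|) = |w| := by
  rw [← mul_div_assoc, ← sq, ← sq_abs, sq, mul_self_div_self]

lemma abs_fb_le (hM : 0 ≤ M) (w : ℝ) : |fb M a₁ a₂ w| ≤ M := by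
  have hsgn : |(w / |w|)| ≤ 1 := by rw [abs_div, abs_abs]; exact div_self_le_one _
  unfold fb
  split_ifs with h₁ h₂ h₃
  · simpa using hM
  · have ha₂ : 0 < a₂ := by linarith [abs_nonneg w]
    have h0 : 0 ≤ 2 - |w| / a₂ := by rw [sub_nonneg, div_le_iff₀ ha₂]; linarith
    have h1 : 2 - |w| / a₂ ≤ 1 := by rw [sub_le_comm, le_div_iff₀ ha₂]; linarith
    rw [abs_mul, abs_mul, abs_neg, abs_of_nonneg hM, abs_of_nonneg h0]
    calc M * |(w / |w|)| * (2 - |w| / a₂) ≤ M * (2 - |w| / a₂) :=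
          mul_le_mul_of_nonneg_right (mul_le_of_le_one_right hM hsgn) h0
      _ ≤ M := mul_le_of_le_one_right hM h1
  · rw [abs_mul, abs_neg, abs_of_nonneg hM]
    exact mul_le_of_le_one_right hM hsgn
  · have ha₁ : 0 < a₁ := by linarith [abs_nonneg w]
    rw [abs_mul, abs_neg, abs_of_nonneg hM, abs_div, abs_of_pos ha₁]
    exact mul_le_of_le_one_right hM ((div_le_one ha₁).2 (by linarith))

lemma abs_force_le (hα : 0 ≤ α) (hβ : 0 ≤ β) (hM : 0 ≤ M) {R w : ℝ} (hw : |w| ≤ R) :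
    |force α β M a₁ a₂ w| ≤ (α + β * R ^ 2) * R + M := by
  have hw2 : w ^ 2 ≤ R ^ 2 := sq_le_sq' (abs_le.1 hw).1 (abs_le.1 hw).2
  have hcub : |α - β * w ^ 2| ≤ α + β * R ^ 2 := by
    rw [abs_le]; constructor <;> nlinarith [sq_nonneg w]
  calc |force α β M a₁ a₂ w| ≤ |α - β * w ^ 2| * |w| + |fb M a₁ a₂ w| := by
        rw [force, ← abs_mul]; exact abs_add_le _ _
    _ ≤ (α + β * R ^ 2) * R + M :=
        add_le_add (mul_le_mul hcub hw (abs_nonneg _) ((abs_nonneg _).trans hcub))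
          (abs_fb_le hM w)

lemma mul_force_le {c m : ℝ} (hβ : 0 ≤ β) (hM : 0 ≤ M) (ha₂ : 0 ≤ a₂) (hc : 0 ≤ c)
    (hcub : ∀ s, 0 ≤ s → (α - β * s ^ 2) * s ≤ m)
    (h₁ : c ≤ M / a₁ - α) (h₂ : c * a₂ ≤ M - m) (h₃ : α + c ≤ β * a₂ ^ 2) (w : ℝ) :
    w * force α β M a₁ a₂ w ≤ -c * w ^ 2 := by
  have hw : w ^ 2 = |w| ^ 2 := (sq_abs w).symm
  -- beyond `a₂` the cubic damping `-β w³` alone suffices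
  have hfar : a₂ ≤ |w| → w * ((α - β * w ^ 2) * w) ≤ -c * w ^ 2 := fun h => by
    have : a₂ ^ 2 ≤ w ^ 2 := by rw [hw]; exact pow_le_pow_left₀ ha₂ h 2
    nlinarith [mul_le_mul_of_nonneg_left (mul_le_mul_of_nonneg_right this (sq_nonneg w)) hβ,
      mul_le_mul_of_nonneg_right h₃ (sq_nonneg w)]
  unfold force fb
  split_ifs with h2a₂ ha₂w ha₁w
  · linarith [hfar (by linarith)]
  · have : 0 ≤ 2 - |w| / a₂ := by
      rw [sub_nonneg, div_le_iff₀ (by linarith [abs_nonneg w])]; linarith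
    have hfb : w * (-M * (w / |w|) * (2 - |w| / a₂)) = -(M * (2 - |w| / a₂) * |w|) := by
      linear_combination (-M * (2 - |w| / a₂)) * mul_div_abs_self w
    nlinarith [hfar ha₂w.le, mul_nonneg (mul_nonneg hM this) (abs_nonneg w)]
  · -- between `a₁` and `a₂` the control beats the maximal cubic gain `m`
    have hfb : w * (-M * (w / |w|)) = -(M * |w|) := by linear_combination -M * mul_div_abs_self w
    have hcub' : w * ((α - β * w ^ 2) * w) = (α - β * |w| ^ 2) * |w| * |w| := by
      rw [sq_abs, mul_assoc _ |w|, abs_mul_abs_self]; ring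
    rw [mul_add, hfb, hcub', hw]
    nlinarith [mul_le_mul_of_nonneg_right (hcub |w| (abs_nonneg w)) (abs_nonneg w),
      mul_le_mul_of_nonneg_left (not_lt.1 ha₂w) (mul_nonneg hc (abs_nonneg w)),
      mul_le_mul_of_nonneg_right h₂ (abs_nonneg w)]
  · have ha₁ : 0 < a₁ := by linarith [abs_nonneg w]
    have : w * ((α - β * w ^ 2) * w + -M * (w / a₁)) = (α - M / a₁) * w ^ 2 - β * w ^ 4 := by
      field_simp; ring
    rw [this]
    nlinarith [mul_le_mul_of_nonneg_right h₁ (sq_nonneg w), pow_nonneg (sq_nonneg w) 2]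

end Force

section Parameters

variable {α β : ℝ}

lemma sqrt_pow_three_div (hα : 0 ≤ α) (β : ℝ) : √(α ^ 3 / β) = α * √(α / β) := by
  rw [show α ^ 3 / β = α ^ 2 * (α / β) by ring, Real.sqrt_mul (sq_nonneg α), Real.sqrt_sq hα]

lemma cubic_le (hα : 0 ≤ α) (hβ : 0 < β) {s : ℝ} (hs : 0 ≤ s) :
    (α - β * s ^ 2) * s ≤ 2 / (3 * √3) * √(α ^ 3 / β) := by
  have h3 : √3 ^ 2 = 3 := Real.sq_sqrt (by norm_num)
  have hq : β * √(α / β) ^ 2 = α := by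
    rw [Real.sq_sqrt (div_nonneg hα hβ.le)]; field_simp
  -- the maximum of `(α - β s²) s` on `s ≥ 0` is attained at `p = √(α / (3 β))`
  set p := √(α / β) / √3
  have hp : 3 * β * p ^ 2 = α := by rw [div_pow, h3]; field_simp; linarith
  have hp0 : 0 ≤ p := by positivity
  have hmax : 2 / (3 * √3) * √(α ^ 3 / β) = 2 / 3 * α * p := by
    rw [sqrt_pow_three_div hα]; simp only [p]; field_simp
  rw [hmax]
  nlinarith [mul_nonneg (mul_nonneg hβ.le (sq_nonneg (s - p))) (by positivity : 0 ≤ s + 2 * p)]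

lemma exists_pos_mul_force_le {M γ a₁ a₂ : ℝ} (hα : 0 < α) (hβ : 0 < β)
    (hM : 2 / (3 * √3) * √(α ^ 3 / β) < M)
    (hγ : max 1 (1 / M * √(α ^ 3 / β)) < γ)
    (ha₁ : a₁ = γ⁻¹ * √(α / β)) (ha₂ : a₂ = γ * √(α / β)) :
    ∃ c > 0, ∀ w, w * force α β M a₁ a₂ w ≤ -c * w ^ 2 := by
  set q := √(α / β)
  set m := 2 / (3 * √3) * √(α ^ 3 / β)
  have hq : β * q ^ 2 = α := by rw [Real.sq_sqrt (by positivity)]; field_simp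
  have hM0 : 0 < M := lt_of_le_of_lt (by positivity) hM
  have hγ1 : 1 < γ := (le_max_left _ _).trans_lt hγ
  have hMγ : α * q < M * γ := by
    have := (le_max_right _ _).trans_lt hγ
    rwa [sqrt_pow_three_div hα.le, one_div, inv_mul_lt_iff₀ hM0] at this
  have ha₂0 : 0 < a₂ := by rw [ha₂]; positivity
  have hc₁ : 0 < M / a₁ - α := by
    rw [ha₁, sub_pos, lt_div_iff₀ (by positivity)]
    field_simp
    linarith
  have hc₃ : 0 < β * a₂ ^ 2 - α := by
    rw [ha₂, mul_pow, ← mul_assoc, mul_comm β, mul_assoc, hq]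
    nlinarith [mul_pos hα (sub_pos.2 (one_lt_pow₀ hγ1 two_ne_zero))]
  refine ⟨min (M / a₁ - α) (min ((M - m) / a₂) (β * a₂ ^ 2 - α)), by positivity,
    mul_force_le hβ.le hM0.le ha₂0.le (by positivity) (fun s hs => cubic_le hα.le hβ hs)
      (min_le_left _ _) ?_ ?_⟩
  · rw [← le_div_iff₀ ha₂0]
    exact (min_le_right _ _).trans (min_le_left _ _)
  · linarith [(min_le_right (M / a₁ - α) _).trans (min_le_right ((M - m) / a₂) (β * a₂ ^ 2 - α))]

end Parameters

theorem tendsto_velocity_zero_of_dissipative {D n : ℕ} [NeZero D] {F : ℝ → ℝ} {c : ℝ}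
    (hc : 0 < c) (hdiss : ∀ w, w * F w ≤ -c * w ^ 2) (hF : ∀ R, ∃ K, ∀ w, |w| ≤ R → |F w| ≤ K)
    {x v : Site D n → ℝ → ℝ} (hx : ∀ l t, 0 ≤ t → HasDerivAt (x l) (v l t) t)
    (hv : ∀ l t, 0 ≤ t → HasDerivAt (v l) (lap (fun l' => x l' t) l + F (v l t)) t)
    (l : Site D n) : Tendsto (v l) atTop (𝓝 0) := by
  set E : ℝ → ℝ := fun t => energy (fun l => x l t) (fun l => v l t)
  have hE : ∀ t, 0 ≤ t → HasDerivAt E (∑ l, v l t * F (v l t)) t := fun t ht =>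
    hasDerivAt_energy (hx · t ht) (hv · t ht)
  have hE' : ∀ t, 0 ≤ t → ∑ l, v l t * F (v l t) ≤ -(c * v l t ^ 2) := fun t _ =>
    calc ∑ l, v l t * F (v l t) ≤ ∑ l, -c * v l t ^ 2 := sum_le_sum fun l _ => hdiss _
      _ = -(c * ∑ l, v l t ^ 2) := by rw [mul_sum, ← sum_neg_distrib]; simp [neg_mul]
      _ ≤ -(c * v l t ^ 2) := by
        gcongr
        exact single_le_sum (f := fun l => v l t ^ 2) (fun _ _ => sq_nonneg _) (mem_univ l)
  have hE_le : ∀ t, 0 ≤ t → E t ≤ E 0 := fun t ht =>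
    antitoneOn_of_forall_hasDerivAt_nonpos (convex_Ici 0) hE
      (fun t ht => (hE' t ht).trans (neg_nonpos.2 (by positivity))) self_mem_Ici ht ht
  set R := √(2 * E 0)
  have h2E_le : ∀ t, 0 ≤ t → 2 * E t ≤ 2 * E 0 := fun t ht => by linarith [hE_le t ht]
  have hv_le : ∀ t, 0 ≤ t → |v l t| ≤ R := fun t ht =>
    Real.abs_le_sqrt ((sq_le_two_mul_energy _ _ l).trans (h2E_le t ht))
  have hlap_le : ∀ t, 0 ≤ t → |lap (fun l' => x l' t) l| ≤ 2 * n * D * R := fun t ht =>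
    abs_lap_le (fun l' k => Real.abs_le_sqrt
      ((sq_diff_le_two_mul_energy _ _ l' k).trans (h2E_le t ht))) l
  obtain ⟨K, hK⟩ := hF R
  have huc : UniformContinuousOn (fun t => c * v l t ^ 2) (Ici 0) :=
    uniformContinuousOn_of_forall_hasDerivAt_abs_le (C := c * (2 * R * (2 * n * D * R + K)))
      (convex_Ici 0) (fun t ht => ((hv l t ht).fun_pow 2).const_mul c) fun t ht => by
        have := abs_add_le (lap (fun l' => x l' t) l) (F (v l t))
        simp only [Nat.cast_ofNat, Nat.add_one_sub_one, pow_one, abs_mul, abs_two,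
          abs_of_pos hc]
        gcongr
        · exact hv_le t ht
        · linarith [hlap_le t ht, hK _ (hv_le t ht)]
  exact tendsto_zero_of_tendsto_mul_sq hc <| tendsto_zero_of_hasDerivAt_le_neg hE hE'
    ⟨0, by rintro _ ⟨t, -, rfl⟩; exact energy_nonneg _ _⟩ (fun t _ => by positivity) huc

theorem velocities_tend_to_zero_general (D n : ℕ) [NeZero D]
    (α β M γ : ℝ) (hα : 0 < α) (hβ : 0 < β)
    (hM : 2 / (3 * Real.sqrt 3) * Real.sqrt (α ^ 3 / β) < M)
    (hγ : max 1 (1 / M * Real.sqrt (α ^ 3 / β)) < γ)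
    (a₁ a₂ : ℝ)
    (ha₁ : a₁ = γ⁻¹ * Real.sqrt (α / β)) (ha₂ : a₂ = γ * Real.sqrt (α / β))
    (x v : Site D n → ℝ → ℝ)
    (hx : ∀ l t, 0 ≤ t → HasDerivAt (x l) (v l t) t)
    (hv : ∀ l t, 0 ≤ t → HasDerivAt (v l)
      (lap (fun l' => x l' t) l + (α - β * (v l t) ^ 2) * v l t + fb M a₁ a₂ (v l t)) t) :
    ∀ l : Site D n, Filter.Tendsto (fun t => v l t) Filter.atTop (nhds 0) := by
  obtain ⟨c, hc, hdiss⟩ := exists_pos_mul_force_le hα hβ hM hγ ha₁ ha₂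
  have hM₀ : 0 ≤ M := le_trans (by positivity) hM.le
  refine tendsto_velocity_zero_of_dissipative hc hdiss
    (fun R => ⟨_, fun w hw => abs_force_le hα.le hβ.le hM₀ hw⟩) hx fun l t ht => ?_
  simpa only [force, ← add_assoc] using hv l t ht

/-- Lemma 2.1: under the feedback control, every velocity converges to zero. -/
theorem velocities_tend_to_zero (D n : ℕ) [NeZero D] (hn : 1 ≤ n)
    (α β M γ : ℝ) (hα : 0 < α) (hβ : 0 < β)
    (hM : 2 / (3 * Real.sqrt 3) * Real.sqrt (α ^ 3 / β) < M)
    (hγ : max 1 (1 / M * Real.sqrt (α ^ 3 / β)) < γ)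
    (a₁ a₂ : ℝ)
    (ha₁ : a₁ = γ⁻¹ * Real.sqrt (α / β)) (ha₂ : a₂ = γ * Real.sqrt (α / β))
    (x v : Site D n → ℝ → ℝ)
    (hx : ∀ l t, 0 ≤ t → HasDerivAt (x l) (v l t) t)
    (hv : ∀ l t, 0 ≤ t → HasDerivAt (v l)
      (lap (fun l' => x l' t) l + (α - β * (v l t) ^ 2) * v l t + fb M a₁ a₂ (v l t)) t) :
    ∀ l : Site D n, Filter.Tendsto (fun t => v l t) Filter.atTop (nhds 0) :=
  velocities_tend_to_zero_general D n α β M γ hα hβ hM hγ a₁ a₂ ha₁ ha₂ x v hx hv
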